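/- Pattern A (three-term contiguous relation of ₃φ₂-series): Let a,b,c,d,e ∈ ℂ with a,c,e ≠ 0, |bd/(qace)| < 1, and all denominators appearing below nonzero. Set 𝒜_q = ((1−b)(1−d/(qa)) − (1−c)(1−e)·bd/(qace)) / ((1−b)(1−d/(qa))), 𝔸_q = (1−bd/(qace))(1−qa)(1−c)(1−e)·bd / ((1−b)(1−qb)(1−d)(1−d/(qa))·qace), and 𝔄_q = (1−bd/(qace)) / ((1−b)(1−d/(qa))). Then ₃φ₂(a,c,e; b,d; q, bd/(ace)) = 𝒜_q·₃φ₂(qa,c,e; qb,d; q, bd/(ace)) + 𝔸_q·₃φ₂(q²a,qc,qe; q²b,qd; q, bd/(qace)), and also ₃φ₂(a,c,e; b,d; q, bd/(ace)) = 𝒜_q·₃φ₂(qa,c,e; qb,d; q, bd/(ace)) + 𝔄_q·₃φ₂*(qa,c,e; qb,d; q, bd/(qace)). -/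

import Mathlib

noncomputable def qPoch (q x : ℂ) (k : ℕ) : ℂ :=
  ∏ i ∈ Finset.range k, (1 - x * q ^ i)

/-- The basic hypergeometric series ₃φ₂(a,c,e; b,d; q, z). -/
noncomputable def phi32 (q z a c e b d : ℂ) : ℂ :=
  ∑' k : ℕ, (qPoch q a k * qPoch q c k * qPoch q e k) /
      (qPoch q b k * qPoch q d k * qPoch q q k) * z ^ k

/-- The shifted basic hypergeometric series ₃φ₂*(a,c,e; b,d; q, z). -/
noncomputable def phi32s (q z a c e b d : ℂ) : ℂ :=
  ∑' k : ℕ, (qPoch q a k * qPoch q c k * qPoch q e k) /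
      (qPoch q b k * qPoch q d k * qPoch q q k) * ((1 - q ^ k) * z ^ k)

/-!
Put `h = d/(qa)` and `W = bd/(qace)`, so that `d = qah`, `Wce = bh` and the argument of the
left-hand side is `qW`. Let `u_k` be the coefficients of `₃φ₂(qa,c,e; qb,d)`. For `k ≥ 1` the
`k`-th term of `₃φ₂(a,…; qW) − 𝒜·₃φ₂(qa,…; qW) − 𝔄·₃φ₂*(qa,…; W)` equals `g_{k-1} − g_k`, where
`g_k = −W (1 − cqᵏ)(1 − eqᵏ) u_k Wᵏ / ((1 − b)(1 − h))`; this is a rational identity in `qᵏ`.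
As `g_k → 0`, the series sums to its `k = 0` term plus `g_0`, which is `0`: the second identity.
Since `(x;q)_{k+1} = (1 − x)(qx;q)_k`, the series `₃φ₂*` is a multiple of the `₃φ₂` with all
parameters multiplied by `q`, and the first identity follows from the second.
-/

open Filter Topology

section QPochhammer

variable (q x : ℂ)

@[simp]
lemma qPoch_zero : qPoch q x 0 = 1 :=
  Finset.prod_range_zero _

lemma qPoch_succ (k : ℕ) : qPoch q x (k + 1) = qPoch q x k * (1 - x * q ^ k) :=
  Finset.prod_range_succ _ _

lemma qPoch_succ' (k : ℕ) : qPoch q x (k + 1) = (1 - x) * qPoch q (q * x) k := by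
  rw [qPoch, Finset.prod_range_succ', pow_zero, mul_one, mul_comm]
  exact congrArg _ (Finset.prod_congr rfl fun i _ => by ring)

variable {q x}

lemma one_sub_mul_pow_ne_zero_of_qPoch_ne_zero (h : ∀ k, qPoch q x k ≠ 0) (k : ℕ) :
    1 - x * q ^ k ≠ 0 :=
  right_ne_zero_of_mul (qPoch_succ q x k ▸ h (k + 1))

lemma one_sub_pow_ne_zero (hq : ‖q‖ < 1) {k : ℕ} (hk : k ≠ 0) : 1 - q ^ k ≠ 0 := by
  intro h
  have := (pow_lt_one₀ (norm_nonneg q) hq hk).ne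
  rw [← norm_pow, ← sub_eq_zero.1 h, norm_one] at this
  exact this rfl

lemma tendsto_one_sub_mul_pow (hq : ‖q‖ < 1) (y : ℂ) :
    Tendsto (fun k : ℕ => 1 - y * q ^ k) atTop (𝓝 1) := by
  simpa using tendsto_const_nhds.sub ((tendsto_pow_atTop_nhds_zero_of_norm_lt_one hq).const_mul y)

end QPochhammer

noncomputable def phi32Coeff (q a c e b d : ℂ) (k : ℕ) : ℂ :=
  qPoch q a k * qPoch q c k * qPoch q e k / (qPoch q b k * qPoch q d k * qPoch q q k)

section Coefficients

variable (q a c e b d : ℂ)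

lemma phi32_eq_tsum (z : ℂ) : phi32 q z a c e b d = ∑' k, phi32Coeff q a c e b d k * z ^ k :=
  rfl

lemma phi32s_eq_tsum (z : ℂ) :
    phi32s q z a c e b d = ∑' k, phi32Coeff q a c e b d k * ((1 - q ^ k) * z ^ k) :=
  rfl

@[simp]
lemma phi32Coeff_zero : phi32Coeff q a c e b d 0 = 1 := by
  simp [phi32Coeff]

-- Valid even where a denominator vanishes, as `(xy)⁻¹ = x⁻¹y⁻¹` in `ℂ`, where `0⁻¹ = 0`.
lemma phi32Coeff_succ (k : ℕ) :
    phi32Coeff q a c e b d (k + 1) = phi32Coeff q a c e b d k *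
      ((1 - a * q ^ k) * (1 - c * q ^ k) * (1 - e * q ^ k) /
        ((1 - b * q ^ k) * (1 - d * q ^ k) * (1 - q * q ^ k))) := by
  simp only [phi32Coeff, qPoch_succ, div_eq_mul_inv, mul_inv]
  ring

lemma phi32Coeff_succ' (k : ℕ) :
    phi32Coeff q a c e b d (k + 1) = (1 - a) * (1 - c) * (1 - e) /
      ((1 - b) * (1 - d) * (1 - q ^ (k + 1))) *
        phi32Coeff q (q * a) (q * c) (q * e) (q * b) (q * d) k := by
  simp only [phi32Coeff, qPoch_succ' q a, qPoch_succ' q b, qPoch_succ' q c, qPoch_succ' q d,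
    qPoch_succ' q e, qPoch_succ q q, pow_succ', div_eq_mul_inv, mul_inv]
  ring

lemma phi32Coeff_succ_eq_mul_shift (k : ℕ) :
    phi32Coeff q a c e b d (k + 1) = (1 - a) * (1 - c * q ^ k) * (1 - e * q ^ k) /
      ((1 - b) * (1 - d * q ^ k) * (1 - q * q ^ k)) * phi32Coeff q (q * a) c e (q * b) d k := by
  simp only [phi32Coeff, qPoch_succ' q a, qPoch_succ' q b, qPoch_succ q c, qPoch_succ q d,
    qPoch_succ q e, qPoch_succ q q, div_eq_mul_inv, mul_inv]
  ring

end Coefficients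

lemma summable_phi32Coeff_mul_pow {q z : ℂ} (hq : ‖q‖ < 1) (hz : ‖z‖ < 1)
    (a c e b d : ℂ) : Summable fun k => phi32Coeff q a c e b d k * z ^ k := by
  have hratio : Tendsto (fun k : ℕ => (1 - a * q ^ k) * (1 - c * q ^ k) * (1 - e * q ^ k) /
      ((1 - b * q ^ k) * (1 - d * q ^ k) * (1 - q * q ^ k)) * z) atTop (𝓝 z) := by
    have h := fun x => tendsto_one_sub_mul_pow hq x
    simpa using ((((h a).mul (h c)).mul (h e)).div (((h b).mul (h d)).mul (h q))
      (by norm_num)).mul_const z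
  refine summable_of_ratio_norm_eventually_le (r := (‖z‖ + 1) / 2) (by linarith) ?_
  filter_upwards [hratio.norm.eventually_lt_const (by linarith : ‖z‖ < (‖z‖ + 1) / 2)]
    with k hk
  rw [phi32Coeff_succ, pow_succ, mul_mul_mul_comm, norm_mul, mul_comm]
  gcongr

lemma tsum_eq_of_eq_sub_succ {α : Type*} [AddCommGroup α] [TopologicalSpace α]
    [IsTopologicalAddGroup α] [T2Space α] {f g : ℕ → α} (hf : Summable f)
    (hfg : ∀ n, f n = g n - g (n + 1)) (hg : Tendsto g atTop (𝓝 0)) : ∑' n, f n = g 0 := by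
  refine tendsto_nhds_unique hf.hasSum.tendsto_sum_nat ?_
  simp only [hfg, Finset.sum_range_sub']
  simpa using hg.const_sub (g 0)

lemma phi32s_eq_mul_phi32 {q : ℂ} (hq : ‖q‖ < 1) (z a c e b d : ℂ) :
    phi32s q z a c e b d = (1 - a) * (1 - c) * (1 - e) * z / ((1 - b) * (1 - d)) *
      phi32 q z (q * a) (q * c) (q * e) (q * b) (q * d) := by
  rw [phi32s_eq_tsum, phi32_eq_tsum, ← tsum_mul_left,
    ← Nat.succ_injective.tsum_eq
      (f := fun k => phi32Coeff q a c e b d k * ((1 - q ^ k) * z ^ k))]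
  · refine tsum_congr fun k => ?_
    have := one_sub_pow_ne_zero hq k.succ_ne_zero
    rw [Nat.succ_eq_add_one, phi32Coeff_succ', pow_succ z]
    field_simp
  · rintro (_ | k) hk
    · simp at hk
    · exact ⟨k, rfl⟩

-- The telescoping step (term `k + 1` equals `g_k − g_{k+1}`) divided by
-- `u_k W^{k+1} (1 − cqᵏ)(1 − eqᵏ)`, where `y = q^{k+1}`.
lemma contiguity_identity {a b c e h W : ℂ} (y : ℂ) (hWce : W * c * e = b * h)
    (hb : 1 - b ≠ 0) (hh : 1 - h ≠ 0) (hby : 1 - b * y ≠ 0) (hahy : 1 - a * h * y ≠ 0)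
    (hy : 1 - y ≠ 0) :
    (1 - a) * y / ((1 - b) * (1 - a * h * y) * (1 - y))
      - ((1 - b) * (1 - h) - (1 - c) * (1 - e) * W) / ((1 - b) * (1 - h)) *
        ((1 - a * y) * y / ((1 - b * y) * (1 - a * h * y) * (1 - y)))
      - (1 - W) / ((1 - b) * (1 - h)) *
        ((1 - a * y) * (1 - y) / ((1 - b * y) * (1 - a * h * y) * (1 - y)))
    = -1 / ((1 - b) * (1 - h))
      + W * (1 - c * y) * (1 - e * y) * (1 - a * y) /
        ((1 - b * y) * (1 - a * h * y) * (1 - y) * ((1 - b) * (1 - h))) := by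
  rw [mul_comm] at hby
  rw [mul_right_comm] at hahy
  field_simp
  linear_combination (y * (1 - y) * (1 - a * y)) * hWce

lemma phi32Coeff_contiguity_step {q a b c e h W : ℂ} (hq : ‖q‖ < 1) (hWce : W * c * e = b * h)
    (hb : 1 - b ≠ 0) (hh : 1 - h ≠ 0) (k : ℕ) (hqb : 1 - q * b * q ^ k ≠ 0)
    (hd : 1 - q * a * h * q ^ k ≠ 0) :
    let u := phi32Coeff q (q * a) c e (q * b) (q * a * h)
    let g := fun k : ℕ => -(W * (1 - c * q ^ k) * (1 - e * q ^ k)) / ((1 - b) * (1 - h)) *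
      (u k * W ^ k)
    phi32Coeff q a c e b (q * a * h) (k + 1) * (q * W) ^ (k + 1)
      - ((1 - b) * (1 - h) - (1 - c) * (1 - e) * W) / ((1 - b) * (1 - h)) *
        (u (k + 1) * (q * W) ^ (k + 1))
      - (1 - W) / ((1 - b) * (1 - h)) * (u (k + 1) * ((1 - q ^ (k + 1)) * W ^ (k + 1)))
    = g k - g (k + 1) := by
  intro u g
  have := contiguity_identity (a := a) (c := c) (e := e) (q * q ^ k) hWce hb hh
    (fun h0 => hqb (by linear_combination h0)) (fun h0 => hd (by linear_combination h0))
    (by rw [← pow_succ']; exact one_sub_pow_ne_zero hq k.succ_ne_zero)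
  simp only [u, g]
  rw [phi32Coeff_succ_eq_mul_shift, phi32Coeff_succ]
  simp only [div_eq_mul_inv, mul_inv] at this ⊢
  linear_combination (u k * W ^ k * W * (1 - c * q ^ k) * (1 - e * q ^ k)) * this

theorem phi32_contiguous_relation {q a b c d e h W : ℂ} (hq : ‖q‖ < 1) (hW : ‖W‖ < 1)
    (hd : d = q * a * h) (hWce : W * c * e = b * h) (hb : 1 - b ≠ 0) (hh : 1 - h ≠ 0)
    (hqb : ∀ k, qPoch q (q * b) k ≠ 0) (hdk : ∀ k, qPoch q d k ≠ 0) :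
    phi32 q (q * W) a c e b d =
      ((1 - b) * (1 - h) - (1 - c) * (1 - e) * W) / ((1 - b) * (1 - h)) *
        phi32 q (q * W) (q * a) c e (q * b) d +
      (1 - W) / ((1 - b) * (1 - h)) * phi32s q W (q * a) c e (q * b) d := by
  set A := ((1 - b) * (1 - h) - (1 - c) * (1 - e) * W) / ((1 - b) * (1 - h))
  set B := (1 - W) / ((1 - b) * (1 - h))
  have hqW : ‖q * W‖ < 1 := by
    rw [norm_mul]; nlinarith [norm_nonneg q, norm_nonneg W]
  have hT := summable_phi32Coeff_mul_pow hq hqW a c e b d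
  have hU₀ := summable_phi32Coeff_mul_pow hq hqW (q * a) c e (q * b) d
  have hH := summable_phi32Coeff_mul_pow hq hW (q * a) c e (q * b) d
  have hS : Summable fun k => B * (phi32Coeff q (q * a) c e (q * b) d k * ((1 - q ^ k) * W ^ k)) :=
    ((hH.sub hU₀).congr fun k => by ring).mul_left B
  have hU := hU₀.mul_left A
  set F := fun k => phi32Coeff q a c e b d k * (q * W) ^ k
    - A * (phi32Coeff q (q * a) c e (q * b) d k * (q * W) ^ k)
    - B * (phi32Coeff q (q * a) c e (q * b) d k * ((1 - q ^ k) * W ^ k))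
  set g := fun k : ℕ => -(W * (1 - c * q ^ k) * (1 - e * q ^ k)) / ((1 - b) * (1 - h)) *
      (phi32Coeff q (q * a) c e (q * b) d k * W ^ k)
  have hg : Tendsto g atTop (𝓝 0) := by
    have hcoeff := (((tendsto_one_sub_mul_pow hq c).const_mul W).mul
      (tendsto_one_sub_mul_pow hq e)).neg.div_const ((1 - b) * (1 - h))
    simpa using hcoeff.mul hH.tendsto_atTop_zero
  have hF : Summable F := (hT.sub hU).sub hS
  have hsum : ∑' k, F k = F 0 + g 0 := by
    refine hF.tsum_eq_zero_add.trans (congrArg _ (tsum_eq_of_eq_sub_succ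
      ((summable_nat_add_iff 1).2 hF) (fun k => ?_) hg))
    subst hd
    exact phi32Coeff_contiguity_step hq hWce hb hh k
      (one_sub_mul_pow_ne_zero_of_qPoch_ne_zero hqb k)
      (one_sub_mul_pow_ne_zero_of_qPoch_ne_zero hdk k)
  have hF0 : F 0 + g 0 = 0 := by
    simp only [F, g, A, B, phi32Coeff_zero, pow_zero]
    field_simp
    ring
  rw [hF0] at hsum
  simp only [F] at hsum
  rw [(hT.sub hU).tsum_sub hS, hT.tsum_sub hU, tsum_mul_left, tsum_mul_left] at hsum
  rw [phi32_eq_tsum, phi32_eq_tsum, phi32s_eq_tsum]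
  linear_combination hsum

theorem patternA_general (q a b c d e : ℂ)
    (hq0 : 0 < ‖q‖) (hq1 : ‖q‖ < 1)
    (ha : a ≠ 0) (hc : c ≠ 0) (he : e ≠ 0)
    (hconv : ‖b * d / (q * a * c * e)‖ < 1)
    (h1 : 1 - b ≠ 0) (h2 : 1 - d / (q * a) ≠ 0)
    (hp1 : ∀ k, qPoch q (d) k ≠ 0) (hp2 : ∀ k, qPoch q (q * b) k ≠ 0) :
    (phi32 q (b * d / (a * c * e)) a c e b d =
      ((1 - b) * (1 - d / (q * a)) - (1 - c) * (1 - e) * (b * d / (q * a * c * e))) / ((1 - b) * (1 - d / (q * a))) *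
        phi32 q (b * d / (a * c * e)) (q * a) c e (q * b) d +
      (1 - b * d / (q * a * c * e)) * (1 - q * a) * (1 - c) * (1 - e) * (b * d) / ((1 - b) * (1 - q * b) * (1 - d) * (1 - d / (q * a)) * (q * a * c * e)) *
        phi32 q (b * d / (q * a * c * e)) (q ^ 2 * a) (q * c) (q * e) (q ^ 2 * b) (q * d)) ∧
    (phi32 q (b * d / (a * c * e)) a c e b d =
      ((1 - b) * (1 - d / (q * a)) - (1 - c) * (1 - e) * (b * d / (q * a * c * e))) / ((1 - b) * (1 - d / (q * a))) *
        phi32 q (b * d / (a * c * e)) (q * a) c e (q * b) d +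
      (1 - b * d / (q * a * c * e)) / ((1 - b) * (1 - d / (q * a))) *
        phi32s q (b * d / (q * a * c * e)) (q * a) c e (q * b) d) := by
  have hq : q ≠ 0 := norm_pos_iff.1 hq0
  have hz : b * d / (a * c * e) = q * (b * d / (q * a * c * e)) := by field_simp
  have hd : d = q * a * (d / (q * a)) := by field_simp
  have hWce : b * d / (q * a * c * e) * c * e = b * (d / (q * a)) := by field_simp
  have second := phi32_contiguous_relation hq1 hconv hd hWce h1 h2 hp2 hp1
  rw [hz]
  refine ⟨?_, second⟩
  rw [second, phi32s_eq_mul_phi32 hq1, ← mul_assoc q q, ← mul_assoc q q, ← sq]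
  simp only [div_eq_mul_inv, mul_inv]
  ring

theorem patternA (q a b c d e : ℂ)
    (hq0 : 0 < ‖q‖) (hq1 : ‖q‖ < 1)
    (ha : a ≠ 0) (hc : c ≠ 0) (he : e ≠ 0)
    (hconv : ‖b * d / (q * a * c * e)‖ < 1)
    (h1 : 1 - b ≠ 0) (h2 : 1 - d / (q * a) ≠ 0)
    (h3 : 1 - q * b ≠ 0) (h4 : 1 - d ≠ 0)
    (hp0 : ∀ k, qPoch q (b) k ≠ 0) (hp1 : ∀ k, qPoch q (d) k ≠ 0) (hp2 : ∀ k, qPoch q (q * b) k ≠ 0) (hp3 : ∀ k, qPoch q (q ^ 2 * b) k ≠ 0) (hp4 : ∀ k, qPoch q (q * d) k ≠ 0) :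
    (phi32 q (b * d / (a * c * e)) a c e b d =
      ((1 - b) * (1 - d / (q * a)) - (1 - c) * (1 - e) * (b * d / (q * a * c * e))) / ((1 - b) * (1 - d / (q * a))) *
        phi32 q (b * d / (a * c * e)) (q * a) c e (q * b) d +
      (1 - b * d / (q * a * c * e)) * (1 - q * a) * (1 - c) * (1 - e) * (b * d) / ((1 - b) * (1 - q * b) * (1 - d) * (1 - d / (q * a)) * (q * a * c * e)) *
        phi32 q (b * d / (q * a * c * e)) (q ^ 2 * a) (q * c) (q * e) (q ^ 2 * b) (q * d)) ∧
    (phi32 q (b * d / (a * c * e)) a c e b d =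
      ((1 - b) * (1 - d / (q * a)) - (1 - c) * (1 - e) * (b * d / (q * a * c * e))) / ((1 - b) * (1 - d / (q * a))) *
        phi32 q (b * d / (a * c * e)) (q * a) c e (q * b) d +
      (1 - b * d / (q * a * c * e)) / ((1 - b) * (1 - d / (q * a))) *
        phi32s q (b * d / (q * a * c * e)) (q * a) c e (q * b) d) :=
  patternA_general q a b c d e hq0 hq1 ha hc he hconv h1 h2 hp1 hp2
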